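/- For any two polynomial functions f, g on the space of n×n complex matrices and every matrix X, {f,g}_{αβ}(X) − {f,g}_std(X) = f^{α←α+1}(X)·g^{β+1←β}(X) − f^{β+1←β}(X)·g^{α←α+1}(X) + f_{β←β+1}(X)·g_{α+1←α}(X) − f_{α+1←α}(X)·g_{β←β+1}(X). -/

import Mathlib

open scoped BigOperators

noncomputable section

/-- The space of `n × n` complex matrices. -/
abbrev Mat (n : ℕ) := Matrix (Fin n) (Fin n) ℂ

/-- Polynomial functions on the space of `n × n` complex matrices. -/
abbrev PolyFn (n : ℕ) := MvPolynomial (Fin n × Fin n) ℂ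

/-- The index of `Fin n` corresponding to the 1-based index `k ∈ [1,n]`. -/
def vIdx (n : ℕ) [NeZero n] (k : ℕ) : Fin n :=
  ⟨(k - 1) % n, Nat.mod_lt _ (Nat.pos_of_ne_zero (NeZero.ne n))⟩

namespace BD

variable (n : ℕ) [NeZero n]

/-- 1-based entry of a matrix. -/
def entM (A : Mat n) (i j : ℕ) : ℂ := A (vIdx n i) (vIdx n j)

/-- 1-based matrix unit `e_{ij}`. -/
def matE (i j : ℕ) : Mat n := Matrix.single (vIdx n i) (vIdx n j) 1

/-- The trace form `⟨A,B⟩ = Tr(AB)`. -/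
def trF (A B : Mat n) : ℂ := (A * B).trace

/-- `ĥ_i = (1/n)·diag(n−i,…,n−i,−i,…,−i)` (first `i` entries `n−i`). -/
def hhat (i : ℕ) : Mat n :=
  Matrix.diagonal fun k => if (k : ℕ) < i then ((n : ℂ) - i) / n else -(i : ℂ) / n

/-- The contribution of a tensor summand `A ⊗ B` of an R-matrix to the operator `R_+`,
i.e. `η ↦ ⟨A,η⟩ • B`, since `⟨⟨A,η⟩ • B, ζ⟩ = ⟨A ⊗ B, η ⊗ ζ⟩_⊗`. -/
def tAp (A B η : Mat n) : Mat n := trF n A η • B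

/-- The contribution of a wedge `A ∧ B = A⊗B − B⊗A` to `R_+`. -/
def wAp (A B η : Mat n) : Mat n := tAp n A B η - tAp n B A η

variable (a b : ℕ)

/-- The contribution of the diagonal part `r_0` to `R_+` (for the BD triple `α ↦ β`,
written `a ↦ b`). -/
def Rplus0 (η : Mat n) : Mat n :=
  (∑ i ∈ Finset.Icc 1 (n - 1), tAp n (hhat n i) (hhat n i) η)
    - (∑ i ∈ Finset.Icc 1 (n - 2), tAp n (hhat n (i + 1)) (hhat n i) η)
    + (if b = a + 1 then
        wAp n (hhat n a) (hhat n b) η + wAp n (hhat n (b - 1)) (hhat n a) η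
          + wAp n (hhat n b) (hhat n (a + 1)) η
      else 0)

/-- The operator `R_+` associated with the standard R-matrix
`r_std = r_0 + Σ_{i<j} e_{ji} ⊗ e_{ij}`. -/
def RplusStd (η : Mat n) : Mat n :=
  Rplus0 n a b η +
    ∑ i ∈ Finset.Icc 1 n, ∑ j ∈ Finset.Icc 1 n,
      (if i < j then tAp n (matE n j i) (matE n i j) η else 0)

/-- The operator `R_+` associated with the R-matrix
`r_{αβ} = r_std + e_{α+1,α} ⊗ e_{β,β+1} − e_{β,β+1} ⊗ e_{α+1,α}`. -/
def RplusAB (η : Mat n) : Mat n :=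
  RplusStd n a b η + tAp n (matE n (a + 1) a) (matE n b (b + 1)) η
    - tAp n (matE n b (b + 1)) (matE n (a + 1) a) η

/-- Evaluation of a polynomial function at a matrix `X`. -/
def evalM (X : Mat n) (f : PolyFn n) : ℂ :=
  MvPolynomial.eval (fun p => X p.1 p.2) f

/-- The gradient `∇f(X)` with respect to the trace form: `(∇f(X))_{ij} = ∂f/∂x_{ji}(X)`. -/
def gradM (f : PolyFn n) (X : Mat n) : Mat n :=
  Matrix.of fun i j => evalM n X (MvPolynomial.pderiv (j, i) f)

/-- The Sklyanin bracket associated with the operator `R`. -/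
def skly (R : Mat n → Mat n) (f g : PolyFn n) (X : Mat n) : ℂ :=
  trF n (R (gradM n f X * X)) (gradM n g X * X)
    - trF n (R (X * gradM n f X)) (X * gradM n g X)

/-- The standard Sklyanin bracket `{·,·}_std`. -/
def brStd (f g : PolyFn n) (X : Mat n) : ℂ := skly n (RplusStd n a b) f g X

/-- The Sklyanin bracket `{·,·}_{αβ}`. -/
def brAB (f g : PolyFn n) (X : Mat n) : ℂ := skly n (RplusAB n a b) f g X

/-- `f^{i←j}(X) = (∇f(X)·X)_{ij}`. -/
def supArr (f : PolyFn n) (i j : ℕ) (X : Mat n) : ℂ := entM n (gradM n f X * X) i j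

/-- `f_{i←j}(X) = (X·∇f(X))_{ji}`. -/
def subArr (f : PolyFn n) (i j : ℕ) (X : Mat n) : ℂ := entM n (X * gradM n f X) j i

/-- The coordinate function `x_{ij}` (1-based) as a polynomial. -/
def xC (i j : ℕ) : PolyFn n := MvPolynomial.X (vIdx n i, vIdx n j)

/-- The determinant of an `s × s` submatrix of the matrix of variables, with (1-based)
row indices `r 0, …, r (s-1)` and column indices `c 0, …, c (s-1)`. -/
def subDet (s : ℕ) (r c : ℕ → ℕ) : PolyFn n :=
  Matrix.det (Matrix.of fun p q : Fin s =>
    (MvPolynomial.X (vIdx n (r p), vIdx n (c q)) : PolyFn n))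

/-- The size of the maximal contiguous square submatrix with upper-left corner `(i,j)`. -/
def msize (i j : ℕ) : ℕ := n + 1 - max i j

/-- The minor `f_{ij} = det X_{[i, min(n,n+i−j)]}^{[j, min(n,n+j−i)]}`. -/
def fMin (i j : ℕ) : PolyFn n :=
  subDet n (msize n i j) (fun p => i + p) (fun q => j + q)

/-- `f_{ij}^{→}` : the minor `f_{ij}` with its last column replaced by the next column. -/
def fMinR (i j : ℕ) : PolyFn n :=
  subDet n (msize n i j) (fun p => i + p)
    (fun q => if q + 1 = msize n i j then j + msize n i j else j + q)

/-- `f_{ij}^{←}` : the minor `f_{ij}` with its first column replaced by the previous column. -/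
def fMinL (i j : ℕ) : PolyFn n :=
  subDet n (msize n i j) (fun p => i + p) (fun q => if q = 0 then j - 1 else j + q)

/-- `f_{ij}^{↓}` : the minor `f_{ij}` with its last row replaced by the next row. -/
def fMinD (i j : ℕ) : PolyFn n :=
  subDet n (msize n i j)
    (fun p => if p + 1 = msize n i j then i + msize n i j else i + p) (fun q => j + q)

/-- `f_{ij}^{↑}` : the minor `f_{ij}` with its first row replaced by the previous row. -/
def fMinU (i j : ℕ) : PolyFn n :=
  subDet n (msize n i j) (fun p => if p = 0 then i - 1 else i + p) (fun q => j + q)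

/-- `θ_k = f_{n+k−α,k}·f_{1,β+1} − f_{n+k−α,k}^{→}·f_{1,β+1}^{←}`. -/
def theta (k : ℕ) : PolyFn n :=
  fMin n (n + k - a) k * fMin n 1 (b + 1) - fMinR n (n + k - a) k * fMinL n 1 (b + 1)

/-- `ψ_m = f_{m,n+m−β}·f_{α+1,1} − f_{m,n+m−β}^{↓}·f_{α+1,1}^{↑}`. -/
def psi (m : ℕ) : PolyFn n :=
  fMin n m (n + m - b) * fMin n (a + 1) 1 - fMinD n m (n + m - b) * fMinU n (a + 1) 1

/-- The initial cluster functions `φ_{ij}`. -/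
def phi (i j : ℕ) : PolyFn n :=
  if 1 ≤ j ∧ j ≤ a ∧ i = n + j - a then theta n a b j
  else if 1 ≤ i ∧ i ≤ b ∧ j = n + i - b then psi n a b i
  else fMin n i j

end BD

/-!
`r_{αβ}` is `r_std` plus the wedge `e_{α+1,α} ∧ e_{β,β+1}`, and the Sklyanin bracket is additive
in `R_+`, so the difference of the brackets is that wedge paired with the left and right
gradients; pairing `e_{ij}` with a matrix reads off its `(j,i)` entry.
-/

namespace BD

variable (n : ℕ)

lemma trF_add_left (A B C : Mat n) : trF n (A + B) C = trF n A C + trF n B C := by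
  simp only [trF, Matrix.add_mul, Matrix.trace_add]

lemma trF_wAp (A B η ζ : Mat n) :
    trF n (wAp n A B η) ζ = trF n A η * trF n B ζ - trF n B η * trF n A ζ := by
  simp only [trF, wAp, tAp, Matrix.sub_mul, Matrix.trace_sub, Matrix.smul_mul,
    Matrix.trace_smul, smul_eq_mul]

lemma trF_matE [NeZero n] (i j : ℕ) (M : Mat n) : trF n (matE n i j) M = entM n M j i := by
  simp [trF, matE, entM, Matrix.trace, Matrix.mul_apply, Matrix.single, ite_and]

lemma skly_add_wAp_sub_skly (R : Mat n → Mat n) (A B : Mat n) (f g : PolyFn n) (X : Mat n) :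
    skly n (fun η => R η + wAp n A B η) f g X - skly n R f g X =
      (trF n A (gradM n f X * X) * trF n B (gradM n g X * X)
          - trF n B (gradM n f X * X) * trF n A (gradM n g X * X))
        - (trF n A (X * gradM n f X) * trF n B (X * gradM n g X)
          - trF n B (X * gradM n f X) * trF n A (X * gradM n g X)) := by
  simp only [skly, trF_add_left, trF_wAp]
  ring

lemma RplusAB_eq_add_wAp [NeZero n] (a b : ℕ) :
    RplusAB n a b =
      fun η => RplusStd n a b η + wAp n (matE n (a + 1) a) (matE n b (b + 1)) η :=
  funext fun _ => add_sub_assoc _ _ _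

end BD

open BD in
theorem statement1_general (n a b : ℕ) [NeZero n] (f g : PolyFn n) (X : Mat n) :
    brAB n a b f g X - brStd n a b f g X =
      supArr n f a (a + 1) X * supArr n g (b + 1) b X
        - supArr n f (b + 1) b X * supArr n g a (a + 1) X
        + subArr n f b (b + 1) X * subArr n g (a + 1) a X
        - subArr n f (a + 1) a X * subArr n g b (b + 1) X := by
  rw [brAB, brStd, RplusAB_eq_add_wAp, skly_add_wAp_sub_skly]
  simp only [supArr, subArr, trF_matE]
  ring

open BD in
/-- the difference between the bracket `{·,·}_{αβ}` and the standard bracket. -/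
theorem statement1 (n a b : ℕ) [NeZero n] (hn : 3 ≤ n) (ha : 1 ≤ a) (hab : a < b)
    (hb : b ≤ n - 1) (f g : PolyFn n) (X : Mat n) :
    brAB n a b f g X - brStd n a b f g X =
      supArr n f a (a + 1) X * supArr n g (b + 1) b X
        - supArr n f (b + 1) b X * supArr n g a (a + 1) X
        + subArr n f b (b + 1) X * subArr n g (a + 1) a X
        - subArr n f (a + 1) a X * subArr n g b (b + 1) X :=
  statement1_general n a b f g X
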